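/- For n = 3, let ℬ = {{1*,2*,3*}, {1,2,3*}, {1,2*,3}, {1*,2,3}} ⊆ J_3. Then ℬ is the basis collection of a Lagrangian matroid. This matroid is representable over the field GF(2), namely by the pair of matrices A = [[0,1,1],[1,0,1],[1,1,0]] and B = I_3; but it is not representable over any field of characteristic different from 2: for any field 𝕂 with char 𝕂 ≠ 2, there exist no 3×3 matrices A, B over 𝕂 with A·Bᵗ symmetric and (A,B) of rank 3 such that the admissible 3-subsets X of J whose 3×3 minor of (A,B) on the columns indexed by X is nonzero are exactly the four members of ℬ. -/

import Mathlib

open Finset Matrix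
open scoped Classical

/-- The index set `J = I ∪ I*`: the element `(i, false)` represents the unstarred
index `i+1`, and `(i, true)` represents the starred index `(i+1)*`. -/
abbrev JJ (n : ℕ) := Fin n × Bool

/-- The involution `* : J → J`. -/
def starJ {n : ℕ} (x : JJ n) : JJ n := (x.1, !x.2)

/-- A subset `A ⊆ J` is admissible iff `A ∩ A* = ∅`. -/
def AdmissibleSet {n : ℕ} (A : Finset (JJ n)) : Prop := ∀ x ∈ A, starJ x ∉ A

/-- An admissible permutation of `J`: one commuting with `*`.  These form the
hyperoctahedral group `W = BC_n`. -/
def AdmissiblePerm {n : ℕ} (w : Equiv.Perm (JJ n)) : Prop := ∀ x, w (starJ x) = starJ (w x)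

/-- The standard ordering `n* < … < 1* < 1 < … < n` on `J`, encoded by a value in `ℤ`. -/
def ordJ {n : ℕ} (x : JJ n) : ℤ := if x.2 then -((x.1 : ℤ) + 1) else (x.1 : ℤ) + 1

/-- The ordering `≤^w` on `J`: `x ≤^w y` iff `w⁻¹ x ≤ w⁻¹ y` in the standard order. -/
def leW {n : ℕ} (w : Equiv.Perm (JJ n)) (x y : JJ n) : Prop :=
  ordJ (w.symm x) ≤ ordJ (w.symm y)

/-- The (Gale) ordering induced by `≤^w` on admissible subsets: `A ≼^w B` iff the
sorted lists dominate componentwise, equivalently iff there is a bijection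
`f : A → B` with `a ≤^w f a` for all `a ∈ A`. -/
def setLE {n : ℕ} (w : Equiv.Perm (JJ n)) (A B : Finset (JJ n)) : Prop :=
  ∃ f : JJ n → JJ n, Set.BijOn f ↑A ↑B ∧ ∀ a ∈ A, leW w a (f a)

/-- `ℬ` is the collection of bases of a symplectic matroid of rank `k`: all members
are admissible `k`-sets, and for every admissible permutation `w` there is a
(necessarily unique) `≤^w`-maximal member (the Maximality Property). -/
def IsSymplecticMatroid {n : ℕ} (k : ℕ) (ℬ : Finset (Finset (JJ n))) : Prop :=
  (∀ A ∈ ℬ, AdmissibleSet A ∧ A.card = k) ∧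
  ∀ w : Equiv.Perm (JJ n), AdmissiblePerm w → ∃ A ∈ ℬ, ∀ B ∈ ℬ, setLE w B A

/-- A Lagrangian matroid is a symplectic matroid of rank `n`. -/
def IsLagrangianMatroid {n : ℕ} (ℬ : Finset (Finset (JJ n))) : Prop :=
  IsSymplecticMatroid n ℬ
/-- Identify `J` with the column index type of the `k × 2n` matrix `C = (A, B)`:
unstarred indices point at columns of `A`, starred ones at columns of `B`. -/
def toCol {n : ℕ} (x : JJ n) : Fin n ⊕ Fin n := if x.2 then Sum.inr x.1 else Sum.inl x.1

/-- The `k × k` minor of `C` on the columns indexed by `X` is nonzero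
(this does not depend on the chosen enumeration of `X`). -/
def MinorNonzero {k n : ℕ} {𝕂 : Type*} [Field 𝕂] (C : Matrix (Fin k) (Fin n ⊕ Fin n) 𝕂)
    (X : Finset (JJ n)) : Prop :=
  ∃ e : Fin k → JJ n, Function.Injective e ∧ Finset.univ.image e = X ∧
    (C.submatrix id fun i => toCol (e i)).det ≠ 0

/-- `ℬ` is the collection of admissible `k`-subsets of `J` whose corresponding
`k × k` minor of `C` is nonzero. -/
def RepBases {k n : ℕ} {𝕂 : Type*} [Field 𝕂] (C : Matrix (Fin k) (Fin n ⊕ Fin n) 𝕂)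
    (ℬ : Finset (Finset (JJ n))) : Prop :=
  ∀ X : Finset (JJ n), X ∈ ℬ ↔ AdmissibleSet X ∧ X.card = k ∧ MinorNonzero C X

/-- The collection `ℬ = {1*2*3*, 123*, 12*3, 1*23}` of admissible 3-subsets of `J`
(for `n = 3`); `(i, false)` is the unstarred index `i+1`, `(i, true)` is `(i+1)*`. -/
def ℬ₀ : Finset (Finset (JJ 3)) :=
  { ({((0 : Fin 3), true), ((1 : Fin 3), true), ((2 : Fin 3), true)} : Finset (JJ 3)),
    ({((0 : Fin 3), false), ((1 : Fin 3), false), ((2 : Fin 3), true)} : Finset (JJ 3)),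
    ({((0 : Fin 3), false), ((1 : Fin 3), true), ((2 : Fin 3), false)} : Finset (JJ 3)),
    ({((0 : Fin 3), true), ((1 : Fin 3), false), ((2 : Fin 3), false)} : Finset (JJ 3)) }


section AuxProofs
attribute [-instance] Classical.propDecidable

instance {n : ℕ} : DecidablePred (AdmissibleSet (n := n)) := fun A => by
  unfold AdmissibleSet; infer_instance

instance {n : ℕ} : DecidablePred (AdmissiblePerm (n := n)) := fun w => by
  unfold AdmissiblePerm; infer_instance

instance {n : ℕ} (w : Equiv.Perm (JJ n)) (x y : JJ n) : Decidable (leW w x y) := by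
  unfold leW; infer_instance

lemma card_B0 : ∀ A ∈ ℬ₀, AdmissibleSet A ∧ A.card = 3 := by decide


def sc (v : Fin 3 → JJ 3) (x : JJ 3) : ℤ := if x.2 then -(ordJ (v x.1)) else ordJ (v x.1)

set_option maxHeartbeats 4000000 in
set_option maxRecDepth 10000 in
lemma key' : ∀ v : Fin 3 → JJ 3, Function.Injective (fun i => (v i).1) →
    ∃ A ∈ ℬ₀, ∀ B ∈ ℬ₀, ∃ p : Fin 3 → Fin 3, ∃ ε : Fin 3 → Bool,
      B.image (fun x => (p x.1, xor x.2 (ε x.1))) = A ∧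
      ∀ b ∈ B, sc v b ≤ sc v (p b.1, xor b.2 (ε b.1)) := by
  decide

lemma ordJ_starJ {n : ℕ} (x : JJ n) : ordJ (starJ x) = -ordJ x := by
  obtain ⟨i, b⟩ := x; cases b <;> simp [ordJ, starJ]

lemma symm_admissible {n : ℕ} {w : Equiv.Perm (JJ n)} (hw : AdmissiblePerm w) :
    ∀ y, w.symm (starJ y) = starJ (w.symm y) := by
  intro y
  have := hw (w.symm y)
  rw [Equiv.apply_symm_apply] at this
  rw [← this, Equiv.symm_apply_apply]

lemma part1 : IsLagrangianMatroid ℬ₀ := by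
  refine ⟨card_B0, ?_⟩
  intro w hw
  set v : Fin 3 → JJ 3 := fun i => w.symm (i, false) with hv
  have hstar : ∀ i : Fin 3, w.symm (i, true) = starJ (v i) := by
    intro i
    have : ((i : Fin 3), true) = starJ (i, false) := rfl
    rw [this, symm_admissible hw]
  have hordsc : ∀ x : JJ 3, ordJ (w.symm x) = sc v x := by
    rintro ⟨i, b⟩
    cases b
    · rfl
    · rw [show ordJ (w.symm (i, true)) = ordJ (starJ (v i)) by rw [hstar], ordJ_starJ]
      simp [sc]
  have hinj : Function.Injective (fun i : Fin 3 => (v i).1) := by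
    intro i j hij
    simp only at hij
    by_cases hb : (v i).2 = (v j).2
    · have : v i = v j := Prod.ext hij hb
      have := w.symm.injective this
      exact (Prod.ext_iff.1 this).1
    · have : v i = starJ (v j) := by
        refine Prod.ext hij ?_
        simp only [starJ]
        cases h1 : (v i).2 <;> cases h2 : (v j).2 <;> simp_all
      have h2 : w.symm (i, false) = w.symm (j, true) := by
        show v i = _
        rw [this, ← hstar]
      have := w.symm.injective h2
      simp at this
  obtain ⟨A, hA, h⟩ := key' v hinj
  refine ⟨A, hA, ?_⟩
  intro B hB
  obtain ⟨p, ε, him, hle⟩ := h B hB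
  refine ⟨fun x => (p x.1, xor x.2 (ε x.1)), ?_, ?_⟩
  · have hcardA : A.card = 3 := (card_B0 A hA).2
    have hcardB : B.card = 3 := (card_B0 B hB).2
    have hinj2 : Set.InjOn (fun x : JJ 3 => (p x.1, xor x.2 (ε x.1))) ↑B := by
      apply Finset.injOn_of_card_image_eq
      rw [him, hcardA, hcardB]
    refine ⟨?_, hinj2, ?_⟩
    · intro x hx
      have : (p x.1, xor x.2 (ε x.1)) ∈ B.image (fun x : JJ 3 => (p x.1, xor x.2 (ε x.1))) :=
        Finset.mem_image_of_mem _ hx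
      rw [him] at this
      exact this
    · intro y hy
      rw [← him] at hy
      rw [Finset.coe_image] at hy
      exact hy
  · intro a ha
    unfold leW
    rw [hordsc, hordsc]
    exact hle a ha



lemma exists_comp_perm {e e' : Fin 3 → JJ 3} (he : Function.Injective e)
    (he' : Function.Injective e') (h : Finset.univ.image e = Finset.univ.image e') :
    ∃ σ : Equiv.Perm (Fin 3), ∀ i, e i = e' (σ i) := by
  have hmem : ∀ i : Fin 3, ∃ j, e' j = e i := by
    intro i
    have : e i ∈ Finset.univ.image e' := by
      rw [← h]; exact Finset.mem_image_of_mem _ (Finset.mem_univ i)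
    obtain ⟨j, _, hj⟩ := Finset.mem_image.1 this
    exact ⟨j, hj⟩
  choose F hF using hmem
  have hFinj : Function.Injective F := by
    intro i j hij
    apply he
    rw [← hF i, ← hF j, hij]
  exact ⟨Equiv.ofBijective F ((Finite.injective_iff_bijective).1 hFinj),
    fun i => (hF i).symm⟩

lemma minorNonzero_iff {𝕂 : Type*} [Field 𝕂] (C : Matrix (Fin 3) (Fin 3 ⊕ Fin 3) 𝕂)
    (X : Finset (JJ 3)) (e' : Fin 3 → JJ 3) (he' : Function.Injective e')
    (him : Finset.univ.image e' = X) :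
    MinorNonzero C X ↔ (C.submatrix id fun i => toCol (e' i)).det ≠ 0 := by
  constructor
  · rintro ⟨e, he, hime, hdet⟩
    obtain ⟨σ, hσ⟩ := exists_comp_perm he he' (hime.trans him.symm)
    have hmat : (C.submatrix id fun i => toCol (e i)) =
        (C.submatrix id fun i => toCol (e' i)).submatrix id ⇑σ := by
      ext i j
      simp [Matrix.submatrix_apply, hσ j]
    rw [hmat, Matrix.det_permute'] at hdet
    intro h0
    rw [h0, mul_zero] at hdet
    exact hdet rfl
  · intro hdet
    exact ⟨e', he', him, hdet⟩

def eCan (t : Fin 3 → Bool) : Fin 3 → JJ 3 := fun i => (i, t i)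

lemma eCan_inj (t : Fin 3 → Bool) : Function.Injective (eCan t) := by
  intro i j h
  exact (Prod.ext_iff.1 h).1



abbrev A₀ : Matrix (Fin 3) (Fin 3) (ZMod 2) := !![0,1,1;1,0,1;1,1,0]
abbrev C₂ : Matrix (Fin 3) (Fin 3 ⊕ Fin 3) (ZMod 2) := Matrix.fromCols A₀ 1

lemma rank_C₂ : C₂.rank = 3 := by
  have h1 : C₂ * Matrix.fromRows (0 : Matrix (Fin 3) (Fin 3) (ZMod 2)) (1 : Matrix (Fin 3) (Fin 3) (ZMod 2)) = 1 := by
    rw [Matrix.fromCols_mul_fromRows]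
    simp
  apply le_antisymm
  · simpa using C₂.rank_le_card_height
  · have h2 := Matrix.rank_mul_le_left C₂ (Matrix.fromRows (0 : Matrix (Fin 3) (Fin 3) (ZMod 2)) (1 : Matrix (Fin 3) (Fin 3) (ZMod 2)))
    rw [h1, Matrix.rank_one] at h2
    simpa using h2

lemma transversal8 : ∀ X : Finset (JJ 3), AdmissibleSet X → X.card = 3 →
    X ∈ ({Finset.univ.image (eCan ![false,false,false]),
      Finset.univ.image (eCan ![false,false,true]),
      Finset.univ.image (eCan ![false,true,false]),
      Finset.univ.image (eCan ![false,true,true]),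
      Finset.univ.image (eCan ![true,false,false]),
      Finset.univ.image (eCan ![true,false,true]),
      Finset.univ.image (eCan ![true,true,false]),
      Finset.univ.image (eCan ![true,true,true])} : Finset (Finset (JJ 3))) := by
  decide

lemma repBases_C₂ : RepBases C₂ ℬ₀ := by
  intro X
  constructor
  · intro hX
    refine ⟨(card_B0 X hX).1, (card_B0 X hX).2, ?_⟩
    fin_cases hX
    · exact ⟨eCan ![true,true,true], eCan_inj _, by decide, by rw [Matrix.det_fin_three]; decide⟩
    · exact ⟨eCan ![false,false,true], eCan_inj _, by decide, by rw [Matrix.det_fin_three]; decide⟩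
    · exact ⟨eCan ![false,true,false], eCan_inj _, by decide, by rw [Matrix.det_fin_three]; decide⟩
    · exact ⟨eCan ![true,false,false], eCan_inj _, by decide, by rw [Matrix.det_fin_three]; decide⟩
  · rintro ⟨h1, h2, h3⟩
    have hX8 := transversal8 X h1 h2
    fin_cases hX8
    · exfalso
      rw [minorNonzero_iff C₂ _ (eCan ![false,false,false]) (eCan_inj _) rfl] at h3
      exact h3 (by rw [Matrix.det_fin_three]; decide)
    · exact by decide
    · exact by decide
    · exfalso
      rw [minorNonzero_iff C₂ _ (eCan ![false,true,true]) (eCan_inj _) rfl] at h3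
      exact h3 (by rw [Matrix.det_fin_three]; decide)
    · exact by decide
    · exfalso
      rw [minorNonzero_iff C₂ _ (eCan ![true,false,true]) (eCan_inj _) rfl] at h3
      exact h3 (by rw [Matrix.det_fin_three]; decide)
    · exfalso
      rw [minorNonzero_iff C₂ _ (eCan ![true,true,false]) (eCan_inj _) rfl] at h3
      exact h3 (by rw [Matrix.det_fin_three]; decide)
    · exact by decide


lemma mul_submatrix_id {𝕂 : Type} [Field 𝕂] (B D : Matrix (Fin 3) (Fin 3) 𝕂)
    (c : Fin 3 → Fin 3) : True := trivial

lemma adm_t : ∀ t : Fin 3 → Bool, AdmissibleSet (Finset.univ.image (eCan t)) ∧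
    (Finset.univ.image (eCan t)).card = 3 := by decide

lemma part3 (𝕂 : Type) [Field 𝕂] (h2 : (2 : 𝕂) ≠ 0) :
    ¬∃ A B : Matrix (Fin 3) (Fin 3) 𝕂, (A * Bᵀ).IsSymm ∧
      (Matrix.fromCols A B).rank = 3 ∧ RepBases (Matrix.fromCols A B) ℬ₀ := by
  rintro ⟨A, B, hsym, _, hrep⟩
  -- `det B ≠ 0` from the basis {1*,2*,3*}
  have hBmem : Finset.univ.image (eCan ![true,true,true]) ∈ ℬ₀ := by decide
  have hB0 := ((hrep _).1 hBmem).2.2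
  rw [minorNonzero_iff _ _ (eCan ![true,true,true]) (eCan_inj _) rfl] at hB0
  have hsubB : ((Matrix.fromCols A B).submatrix id
      fun i => toCol (eCan ![true,true,true] i)) = B := by
    ext i j
    fin_cases j <;> simp [Matrix.submatrix_apply, eCan, toCol, Matrix.fromCols]
  rw [hsubB] at hB0
  have hBu : IsUnit B.det := isUnit_iff_ne_zero.2 hB0
  set S : Matrix (Fin 3) (Fin 3) 𝕂 := B⁻¹ * A with hSdef
  have hBS : B * S = A := by
    rw [hSdef, ← Matrix.mul_assoc, Matrix.mul_nonsing_inv B hBu, Matrix.one_mul]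
  have hCB : Matrix.fromCols A B = B * Matrix.fromCols S (1 : Matrix (Fin 3) (Fin 3) 𝕂) := by
    rw [Matrix.mul_fromCols, hBS, Matrix.mul_one]
  -- transfer the minors to (S, 1)
  have key : ∀ t : Fin 3 → Bool,
      (MinorNonzero (Matrix.fromCols A B) (Finset.univ.image (eCan t)) ↔
        ((Matrix.fromCols S (1 : Matrix (Fin 3) (Fin 3) 𝕂)).submatrix id
          fun i => toCol (eCan t i)).det ≠ 0) := by
    intro t
    rw [minorNonzero_iff _ _ (eCan t) (eCan_inj _) rfl]
    have hmat : ((Matrix.fromCols A B).submatrix id fun i => toCol (eCan t i)) =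
        B * ((Matrix.fromCols S (1 : Matrix (Fin 3) (Fin 3) 𝕂)).submatrix id
          fun i => toCol (eCan t i)) := by
      have : ∀ (D : Matrix (Fin 3) (Fin 3 ⊕ Fin 3) 𝕂) (c : Fin 3 → Fin 3 ⊕ Fin 3),
          ((B * D).submatrix id c) = B * (D.submatrix id c) := by
        intro D c
        ext i j
        simp [Matrix.mul_apply, Matrix.submatrix_apply]
      rw [hCB, this]
    rw [hmat, Matrix.det_mul, mul_ne_zero_iff]
    exact ⟨fun h => h.2, fun h => ⟨hB0, h⟩⟩
  -- minor values for the 8 transversals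
  have hbad : ∀ t : Fin 3 → Bool, Finset.univ.image (eCan t) ∉ ℬ₀ →
      ((Matrix.fromCols S (1 : Matrix (Fin 3) (Fin 3) 𝕂)).submatrix id
        fun i => toCol (eCan t i)).det = 0 := by
    intro t hnot
    by_contra h
    exact hnot ((hrep _).2 ⟨(adm_t t).1, (adm_t t).2, (key t).2 h⟩)
  have hgood : ∀ t : Fin 3 → Bool, Finset.univ.image (eCan t) ∈ ℬ₀ →
      ((Matrix.fromCols S (1 : Matrix (Fin 3) (Fin 3) 𝕂)).submatrix id
        fun i => toCol (eCan t i)).det ≠ 0 := by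
    intro t hmem
    exact (key t).1 ((hrep _).1 hmem).2.2
  -- symmetry of S
  have hBA : B * Aᵀ = A * Bᵀ := by
    have := hsym
    unfold Matrix.IsSymm at this
    rw [Matrix.transpose_mul, Matrix.transpose_transpose] at this
    exact this
  have hS : Sᵀ = S := by
    have h1 : B * Sᵀ = A := by
      rw [hSdef, Matrix.transpose_mul, Matrix.transpose_nonsing_inv, ← Matrix.mul_assoc,
        hBA, Matrix.mul_assoc, Matrix.mul_nonsing_inv _ (by rwa [Matrix.det_transpose]),
        Matrix.mul_one]
    have h2' : B * Sᵀ = B * S := by rw [h1, hBS]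
    have := congrArg (fun M => B⁻¹ * M) h2'
    simpa [← Matrix.mul_assoc, Matrix.nonsing_inv_mul B hBu] using this
  -- extract the scalar equations
  have d_fff := hbad ![false,false,false] (by decide)
  have d_ftt := hbad ![false,true,true] (by decide)
  have d_tft := hbad ![true,false,true] (by decide)
  have d_ttf := hbad ![true,true,false] (by decide)
  have d_fft := hgood ![false,false,true] (by decide)
  have d_ftf := hgood ![false,true,false] (by decide)
  have d_tff := hgood ![true,false,false] (by decide)
  simp only [Matrix.det_fin_three, Matrix.submatrix_apply, Matrix.fromCols, eCan, toCol,
    Matrix.one_apply, Matrix.of_apply, id, Matrix.cons_val_zero, Matrix.cons_val_one,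
    Matrix.head_cons, Matrix.cons_val_two, Matrix.tail_cons, Sum.elim_inl, Sum.elim_inr,
    if_true, if_false, Bool.false_eq_true, Fin.isValue, ite_true, ite_false,
    one_mul, mul_one, mul_zero, zero_mul, sub_zero, zero_sub, add_zero, zero_add, neg_zero,
    Matrix.one_apply_eq, ne_eq, Fin.reduceEq, not_false_eq_true, Matrix.one_apply_ne,
    mul_neg, neg_neg, neg_mul] at d_fff d_ftt d_tft d_ttf d_fft d_ftf d_tff
  have hSap : ∀ i j : Fin 3, S i j = S j i := by
    intro i j
    conv_lhs => rw [← hS]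
    rw [Matrix.transpose_apply]
  have s10 : S 1 0 = S 0 1 := hSap 1 0
  have s20 : S 2 0 = S 0 2 := hSap 2 0
  have s21 : S 2 1 = S 1 2 := hSap 2 1
  simp only [s10, s20, s21, d_ftt, d_tft, d_ttf] at d_fff d_fft d_ftf d_tff
  have ha : S 0 1 ≠ 0 := by intro h; apply d_fft; rw [h]; ring
  have hb : S 0 2 ≠ 0 := by intro h; apply d_ftf; rw [h]; ring
  have hc : S 1 2 ≠ 0 := by intro h; apply d_tff; rw [h]; ring
  have habc : S 0 1 * S 0 2 * S 1 2 ≠ 0 := mul_ne_zero (mul_ne_zero ha hb) hc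
  have h2' : (2 : 𝕂) * (S 0 1 * S 0 2 * S 1 2) = 0 := by linear_combination d_fff
  exact habc ((mul_eq_zero.1 h2').resolve_left h2)



end AuxProofs

/-- `ℬ₀ = {1*2*3*, 123*, 12*3, 1*23}` is the basis collection of a
Lagrangian matroid; it is represented over `GF(2)` by the pair
`A = [[0,1,1],[1,0,1],[1,1,0]]`, `B = I₃`; but it is not representable over any field
of characteristic `≠ 2`. -/
theorem example_matroid_representable_only_in_char_two :
    IsLagrangianMatroid ℬ₀ ∧
    ((Matrix.fromCols (!![0,1,1;1,0,1;1,1,0] : Matrix (Fin 3) (Fin 3) (ZMod 2))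
        (1 : Matrix (Fin 3) (Fin 3) (ZMod 2))).rank = 3 ∧
      RepBases (Matrix.fromCols (!![0,1,1;1,0,1;1,1,0] : Matrix (Fin 3) (Fin 3) (ZMod 2))
        (1 : Matrix (Fin 3) (Fin 3) (ZMod 2))) ℬ₀) ∧
    ∀ (𝕂 : Type) [Field 𝕂], (2 : 𝕂) ≠ 0 →
      ¬∃ A B : Matrix (Fin 3) (Fin 3) 𝕂, (A * Bᵀ).IsSymm ∧
        (Matrix.fromCols A B).rank = 3 ∧ RepBases (Matrix.fromCols A B) ℬ₀ := by
  exact ⟨part1, ⟨rank_C₂, repBases_C₂⟩, part3⟩
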